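/- arXiv:math/9901076 — 3 statements merged into one kernel-verified Lean document; each statement's English description precedes it below -/
import Mathlib

section
/- Let g and h be invertible N×N complex matrices. Suppose g = u * exp(a) and g h = w * exp(b), where u, w are unitary matrices and a, b are Hermitian matrices. Let C = max(‖h‖_op, ‖h⁻¹‖_op), so C ≥ 1. Then N^{-1/2} ‖b‖_F − log C ≤ ‖a‖_F ≤ N^{1/2} (‖b‖_F + log C), where ‖·‖_F denotes the Frobenius norm (‖a‖_F = (Tr(a aᴴ))^{1/2}). -/
noncomputable def frobNorm {N : ℕ} (a : Matrix (Fin N) (Fin N) ℂ) : ℝ :=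
  Real.sqrt (Matrix.trace (a * a.conjTranspose)).re

/-!
For Hermitian `a` the operator norm is recovered from the exponential as
`exp ‖a‖ = max ‖exp a‖ ‖exp (-a)‖`: the spectrum of `a` reaches `±‖a‖` and `exp` is monotone.
Since `exp b = q * exp a * h` with `q = w⋆ u` unitary and `exp (-b) = h⁻¹ * exp (-a) * q⋆`,
submultiplicativity gives `exp ‖b‖ ≤ C * exp ‖a‖`, and symmetrically, so the operator norms of `a`
and `b` differ by at most `log C`. The Frobenius and operator norms on `N × N` matrices differ by
a factor of at most `√N`.
-/

open scoped Matrix.Norms.L2Operator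

section CStarAlgebra

variable {A : Type*} [CStarAlgebra A]

lemma one_le_max_norm_units [Nontrivial A] (h : Aˣ) : 1 ≤ max ‖(h : A)‖ ‖(↑h⁻¹ : A)‖ := by
  have hmul : 1 ≤ ‖(h : A)‖ * ‖(↑h⁻¹ : A)‖ := by simpa using norm_mul_le (h : A) ↑h⁻¹
  by_contra! hlt
  have := mul_lt_mul'' (max_lt_iff.mp hlt).1 (max_lt_iff.mp hlt).2 (norm_nonneg _) (norm_nonneg _)
  linarith

lemma exp_neg_mul_exp (b : A) : NormedSpace.exp (-b) * NormedSpace.exp b = 1 := by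
  let _ : NormedAlgebra ℚ A := .restrictScalars ℚ ℂ A
  rw [← NormedSpace.exp_add_of_commute (Commute.neg_left (Commute.refl b)), neg_add_cancel,
    NormedSpace.exp_zero]

lemma exp_neg_eq_of_exp_eq {a b q : A} (hq : q ∈ unitary A) (h : Aˣ)
    (hab : NormedSpace.exp b = q * NormedSpace.exp a * h) :
    NormedSpace.exp (-b) = ↑h⁻¹ * NormedSpace.exp (-a) * star q := by
  refine left_inv_eq_right_inv (exp_neg_mul_exp b) ?_
  have ha : NormedSpace.exp a * NormedSpace.exp (-a) = 1 := by simpa using exp_neg_mul_exp (-a)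
  simp only [hab, mul_assoc, Units.mul_inv_cancel_left]
  rw [← mul_assoc (NormedSpace.exp a), ha, one_mul, Unitary.mul_star_self_of_mem hq]

lemma norm_exp_le_exp_norm_of_isSelfAdjoint {a : A} (ha : IsSelfAdjoint a) :
    ‖NormedSpace.exp a‖ ≤ Real.exp ‖a‖ := by
  rw [← CFC.real_exp_eq_normedSpace_exp ha]
  refine norm_cfc_le (Real.exp_pos _).le fun x hx => ?_
  rw [Real.norm_of_nonneg (Real.exp_pos x).le, Real.exp_le_exp]
  exact (le_abs_self x).trans (IsometricContinuousFunctionalCalculus.norm_spectrum_le a hx ha)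

lemma exp_le_norm_exp_of_mem_spectrum [Nontrivial A] {a : A} {x : ℝ} (hx : x ∈ spectrum ℝ a) :
    Real.exp x ≤ ‖NormedSpace.exp a‖ := by
  simpa [← Real.exp_eq_exp_ℝ, abs_of_pos (Real.exp_pos x)] using
    spectrum.norm_le_norm_of_mem (spectrum.exp_mem_exp a hx)

lemma max_norm_exp_norm_exp_neg_eq [Nontrivial A] {a : A} (ha : IsSelfAdjoint a) :
    max ‖NormedSpace.exp a‖ ‖NormedSpace.exp (-a)‖ = Real.exp ‖a‖ := by
  refine le_antisymm (max_le (norm_exp_le_exp_norm_of_isSelfAdjoint ha) ?_) ?_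
  · simpa using norm_exp_le_exp_norm_of_isSelfAdjoint ha.neg
  · rcases CStarAlgebra.norm_or_neg_norm_mem_spectrum ha with h | h
    · exact le_max_of_le_left (exp_le_norm_exp_of_mem_spectrum h)
    · refine le_max_of_le_right (exp_le_norm_exp_of_mem_spectrum ?_)
      rw [← spectrum.neg_eq]
      simpa using h

lemma norm_le_norm_add_log_of_exp_eq [Nontrivial A] {a b q : A} (ha : IsSelfAdjoint a)
    (hb : IsSelfAdjoint b) (hq : q ∈ unitary A) (h : Aˣ)
    (hab : NormedSpace.exp b = q * NormedSpace.exp a * h) :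
    ‖b‖ ≤ ‖a‖ + Real.log (max ‖(h : A)‖ ‖(↑h⁻¹ : A)‖) := by
  set C := max ‖(h : A)‖ ‖(↑h⁻¹ : A)‖
  have hC : 0 < C := one_pos.trans_le (one_le_max_norm_units h)
  have hexp : ‖NormedSpace.exp b‖ ≤ Real.exp ‖a‖ * C := calc
    ‖NormedSpace.exp b‖ = ‖NormedSpace.exp a * h‖ := by
      rw [hab, mul_assoc, CStarRing.norm_mem_unitary_mul _ hq]
    _ ≤ ‖NormedSpace.exp a‖ * ‖(h : A)‖ := norm_mul_le _ _
    _ ≤ Real.exp ‖a‖ * C := by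
      gcongr
      exacts [norm_exp_le_exp_norm_of_isSelfAdjoint ha, le_max_left _ _]
  have hexp_neg : ‖NormedSpace.exp (-b)‖ ≤ Real.exp ‖a‖ * C := calc
    ‖NormedSpace.exp (-b)‖ = ‖↑h⁻¹ * NormedSpace.exp (-a)‖ := by
      rw [exp_neg_eq_of_exp_eq hq h hab, CStarRing.norm_mul_mem_unitary _ (Unitary.star_mem hq)]
    _ ≤ ‖(↑h⁻¹ : A)‖ * ‖NormedSpace.exp (-a)‖ := norm_mul_le _ _
    _ ≤ C * Real.exp ‖a‖ := by
      gcongr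
      exacts [le_max_right _ _, by simpa using norm_exp_le_exp_norm_of_isSelfAdjoint ha.neg]
    _ = Real.exp ‖a‖ * C := mul_comm _ _
  rw [← Real.exp_le_exp, Real.exp_add, Real.exp_log hC, ← max_norm_exp_norm_exp_neg_eq hb]
  exact max_le hexp hexp_neg

lemma abs_norm_sub_norm_le_log_of_exp_eq [Nontrivial A] {a b q : A} (ha : IsSelfAdjoint a)
    (hb : IsSelfAdjoint b) (hq : q ∈ unitary A) (h : Aˣ)
    (hab : NormedSpace.exp b = q * NormedSpace.exp a * h) :
    |‖b‖ - ‖a‖| ≤ Real.log (max ‖(h : A)‖ ‖(↑h⁻¹ : A)‖) := by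
  have hba : NormedSpace.exp a = star q * NormedSpace.exp b * ↑h⁻¹ := by
    rw [hab, ← mul_assoc, ← mul_assoc, Unitary.star_mul_self_of_mem hq, one_mul,
      Units.mul_inv_cancel_right]
  have hb_le := norm_le_norm_add_log_of_exp_eq ha hb hq h hab
  have ha_le := norm_le_norm_add_log_of_exp_eq hb ha (Unitary.star_mem hq) h⁻¹ hba
  rw [inv_inv, max_comm] at ha_le
  exact abs_sub_le_iff.mpr ⟨by linarith, by linarith⟩

end CStarAlgebra

namespace Matrix

variable {𝕜 m n : Type*} [RCLike 𝕜] [Fintype m] [Fintype n] [DecidableEq n]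

lemma l2_opNorm_le_sqrt_sum_norm_sq (A : Matrix m n 𝕜) :
    ‖A‖ ≤ √(∑ i, ∑ j, ‖A i j‖ ^ 2) := by
  rw [l2_opNorm_def]
  refine ContinuousLinearMap.opNorm_le_bound _ (Real.sqrt_nonneg _) fun x => ?_
  rw [← pow_le_pow_iff_left₀ (norm_nonneg _) (by positivity) two_ne_zero, mul_pow,
    Real.sq_sqrt (by positivity), EuclideanSpace.norm_sq_eq, EuclideanSpace.norm_sq_eq,
    Finset.sum_mul]
  refine Finset.sum_le_sum fun i _ => ?_
  calc _ = ‖∑ j, A i j * x j‖ ^ 2 := by simp [toLpLin_apply, mulVec, dotProduct]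
    _ ≤ (∑ j, ‖A i j‖ * ‖x j‖) ^ 2 := by
        gcongr; exact (norm_sum_le _ _).trans_eq (by simp only [norm_mul])
    _ ≤ _ := Finset.sum_mul_sq_le_sq_mul_sq _ _ _

lemma sum_norm_sq_le_card_mul_l2_opNorm_sq (A : Matrix m n 𝕜) :
    ∑ i, ∑ j, ‖A i j‖ ^ 2 ≤ Fintype.card n * ‖A‖ ^ 2 := by
  have hcol : ∀ j, ∑ i, ‖A i j‖ ^ 2 ≤ ‖A‖ ^ 2 := fun j => calc
    ∑ i, ‖A i j‖ ^ 2 = ‖WithLp.toLp 2 (A.col j)‖ ^ 2 := by simp [EuclideanSpace.norm_sq_eq]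
    _ ≤ ‖A‖ ^ 2 := by gcongr; simpa using l2_opNorm_mulVec A (EuclideanSpace.single j 1)
  rw [Finset.sum_comm]
  simpa [Finset.card_univ] using Finset.sum_le_sum fun j (_ : j ∈ Finset.univ) => hcol j

end Matrix

section frobNorm

variable {N : ℕ}

lemma frobNorm_eq_sqrt_sum_norm_sq (A : Matrix (Fin N) (Fin N) ℂ) :
    frobNorm A = √(∑ i, ∑ j, ‖A i j‖ ^ 2) := by
  rw [frobNorm]
  congr 1
  simp [Matrix.trace, Matrix.mul_apply, Complex.mul_conj, Complex.normSq_eq_norm_sq,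
    - Complex.ofReal_pow]

lemma l2_opNorm_le_frobNorm (A : Matrix (Fin N) (Fin N) ℂ) : ‖A‖ ≤ frobNorm A :=
  frobNorm_eq_sqrt_sum_norm_sq A ▸ A.l2_opNorm_le_sqrt_sum_norm_sq

lemma frobNorm_le_sqrt_mul_l2_opNorm (A : Matrix (Fin N) (Fin N) ℂ) :
    frobNorm A ≤ √N * ‖A‖ := by
  rw [frobNorm_eq_sqrt_sum_norm_sq, ← Real.sqrt_sq (norm_nonneg A), ← Real.sqrt_mul N.cast_nonneg]
  exact Real.sqrt_le_sqrt (by simpa using A.sum_norm_sq_le_card_mul_l2_opNorm_sq)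

end frobNorm

theorem frobNorm_polar_comparison_general
    (N : ℕ) (hN : 0 < N) (g h u w a b : Matrix (Fin N) (Fin N) ℂ)
    (hh : IsUnit h)
    (hu : u * u.conjTranspose = 1)
    (hw : w * w.conjTranspose = 1)
    (ha : a.IsHermitian) (hb : b.IsHermitian)
    (hdec1 : g = u * NormedSpace.exp a)
    (hdec2 : g * h = w * NormedSpace.exp b) :
    1 ≤ max ‖Matrix.toEuclideanCLM (𝕜 := ℂ) h‖ ‖Matrix.toEuclideanCLM (𝕜 := ℂ) h⁻¹‖ ∧
    (Real.sqrt N)⁻¹ * frobNorm b -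
        Real.log (max ‖Matrix.toEuclideanCLM (𝕜 := ℂ) h‖
          ‖Matrix.toEuclideanCLM (𝕜 := ℂ) h⁻¹‖)
      ≤ frobNorm a ∧
    frobNorm a ≤ Real.sqrt N *
      (frobNorm b +
        Real.log (max ‖Matrix.toEuclideanCLM (𝕜 := ℂ) h‖
          ‖Matrix.toEuclideanCLM (𝕜 := ℂ) h⁻¹‖)) := by
  have : NeZero N := ⟨hN.ne'⟩
  simp only [← Matrix.cstar_norm_def]
  have hu' : u ∈ unitary _ := Matrix.mem_unitaryGroup_iff.mpr hu
  have hw' : w ∈ unitary _ := Matrix.mem_unitaryGroup_iff.mpr hw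
  have hexp : NormedSpace.exp b = (star w * u) * NormedSpace.exp a * hh.unit := calc
    NormedSpace.exp b = star w * (w * NormedSpace.exp b) := by
      rw [← mul_assoc, Unitary.star_mul_self_of_mem hw', one_mul]
    _ = (star w * u) * NormedSpace.exp a * hh.unit := by
      rw [← hdec2, hdec1, IsUnit.unit_spec]; simp only [mul_assoc]
  have hab := abs_norm_sub_norm_le_log_of_exp_eq ha.isSelfAdjoint hb.isSelfAdjoint
    (mul_mem (Unitary.star_mem hw') hu') hh.unit hexp
  rw [IsUnit.unit_spec, Matrix.coe_units_inv, IsUnit.unit_spec] at hab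
  obtain ⟨hb_le, ha_le⟩ := abs_sub_le_iff.mp hab
  have hsqrtN : 0 < √(N : ℝ) := Real.sqrt_pos.mpr (by exact_mod_cast hN)
  refine ⟨?_, ?_, ?_⟩
  · simpa [Matrix.coe_units_inv] using one_le_max_norm_units hh.unit
  · have hb_frob : (√N)⁻¹ * frobNorm b ≤ ‖b‖ := by
      rw [inv_mul_le_iff₀ hsqrtN]; exact frobNorm_le_sqrt_mul_l2_opNorm b
    linarith [l2_opNorm_le_frobNorm a]
  · calc frobNorm a ≤ √N * ‖a‖ := frobNorm_le_sqrt_mul_l2_opNorm a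
      _ ≤ √N * (frobNorm b + _) := by
        gcongr; linarith [l2_opNorm_le_frobNorm b]

/-- If `g = u * exp a` and `g * h = w * exp b` are polar-type decompositions
(`u`, `w` unitary; `a`, `b` Hermitian) of invertible matrices, and
`C = max (‖h‖_op) (‖h⁻¹‖_op)`, then
`N^(-1/2) ‖b‖_F − log C ≤ ‖a‖_F ≤ N^(1/2) (‖b‖_F + log C)`. -/
theorem frobNorm_polar_comparison
    (N : ℕ) (hN : 0 < N) (g h u w a b : Matrix (Fin N) (Fin N) ℂ)
    (hg : IsUnit g) (hh : IsUnit h)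
    (hu : u * u.conjTranspose = 1)
    (hw : w * w.conjTranspose = 1)
    (ha : a.IsHermitian) (hb : b.IsHermitian)
    (hdec1 : g = u * NormedSpace.exp a)
    (hdec2 : g * h = w * NormedSpace.exp b) :
    1 ≤ max ‖Matrix.toEuclideanCLM (𝕜 := ℂ) h‖ ‖Matrix.toEuclideanCLM (𝕜 := ℂ) h⁻¹‖ ∧
    (Real.sqrt N)⁻¹ * frobNorm b -
        Real.log (max ‖Matrix.toEuclideanCLM (𝕜 := ℂ) h‖
          ‖Matrix.toEuclideanCLM (𝕜 := ℂ) h⁻¹‖)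
      ≤ frobNorm a ∧
    frobNorm a ≤ Real.sqrt N *
      (frobNorm b +
        Real.log (max ‖Matrix.toEuclideanCLM (𝕜 := ℂ) h‖
          ‖Matrix.toEuclideanCLM (𝕜 := ℂ) h⁻¹‖)) :=
  frobNorm_polar_comparison_general N hN g h u w a b hh hu hw ha hb hdec1 hdec2
end

section
/- Let E be a finite-dimensional complex inner product space and A a self-adjoint (Hermitian) linear endomorphism of E. Let x ∈ E and define f(t) = ⟪exp(tA) x, A exp(tA) x⟫ (a real number, since A is self-adjoint). If x lies in the span of the eigenvectors of A with nonpositive eigenvalues, then f(t) tends to 0 as t → +∞; otherwise f(t) tends to +∞ as t → +∞. -/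
/-!
Expand `x = ∑ cᵢ • bᵢ` in an orthonormal eigenbasis `bᵢ` of `A`, with eigenvalues `μᵢ`.
Since `exp (t • A)` acts on `bᵢ` by `e^{t μᵢ}`, the real part becomes
`t ↦ ∑ μᵢ e^{2 t μᵢ} |cᵢ|²`; each term tends to `0` if `μᵢ ≤ 0` or `cᵢ = 0`, and to `+∞`
otherwise. Eigenvectors for distinct eigenvalues are orthogonal, so `x` lies in the span of the
eigenvectors with nonpositive eigenvalues exactly when `cᵢ = 0` whenever `μᵢ > 0`.
-/

open Filter Topology

theorem NormedSpace.exp_apply_of_apply_eq_smul {𝕜 E : Type*} [RCLike 𝕜] [NormedAddCommGroup E]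
    [NormedSpace 𝕜 E] [CompleteSpace E] {A : E →L[𝕜] E} {v : E} {μ : 𝕜} (h : A v = μ • v) :
    NormedSpace.exp A v = NormedSpace.exp μ • v := by
  have hpow : ∀ n : ℕ, (A ^ n) v = μ ^ n • v := fun n => by
    induction n with
    | zero => simp
    | succ n ih => rw [pow_succ, mul_apply_eq_comp, h, map_smul, ih, smul_smul, ← pow_succ']
  have hA := (NormedSpace.exp_series_hasSum_exp' (𝕂 := 𝕜) A).mapL
    (ContinuousLinearMap.apply 𝕜 E v)
  have hμ := (NormedSpace.exp_series_hasSum_exp' (𝕂 := 𝕜) μ).smul_const v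
  refine hA.unique (hμ.congr_fun fun n => ?_)
  simp [hpow, smul_smul]

theorem tendsto_mul_exp_mul_sq_mul_nhds_zero {μ K : ℝ} (h : μ ≤ 0 ∨ K = 0) :
    Tendsto (fun t : ℝ => μ * Real.exp (t * μ) ^ 2 * K) atTop (𝓝 0) := by
  rcases h with hμ | rfl
  · rcases hμ.eq_or_lt with rfl | hμ
    · simp
    · have hexp : Tendsto (fun t : ℝ => Real.exp (t * μ)) atTop (𝓝 0) :=
        Real.tendsto_exp_atBot.comp (tendsto_id.atTop_mul_const_of_neg hμ)
      simpa using ((hexp.pow 2).const_mul μ).mul_const K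
  · simp

theorem tendsto_mul_exp_mul_sq_mul_atTop {μ K : ℝ} (hμ : 0 < μ) (hK : 0 < K) :
    Tendsto (fun t : ℝ => μ * Real.exp (t * μ) ^ 2 * K) atTop atTop := by
  have hexp : Tendsto (fun t : ℝ => Real.exp (t * μ) ^ 2) atTop atTop :=
    (tendsto_pow_atTop two_ne_zero).comp
      (Real.tendsto_exp_atTop.comp (tendsto_id.atTop_mul_const hμ))
  exact (hexp.const_mul_atTop (mul_pos hμ hK)).congr fun t => by ring

theorem tendsto_mul_exp_mul_sq_mul_nhds_zero_or_atTop (μ : ℝ) {K : ℝ} (hK : 0 ≤ K) :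
    Tendsto (fun t : ℝ => μ * Real.exp (t * μ) ^ 2 * K) atTop (𝓝 0) ∨
      Tendsto (fun t : ℝ => μ * Real.exp (t * μ) ^ 2 * K) atTop atTop := by
  by_cases h : μ ≤ 0 ∨ K = 0
  · exact Or.inl (tendsto_mul_exp_mul_sq_mul_nhds_zero h)
  · push Not at h
    exact Or.inr (tendsto_mul_exp_mul_sq_mul_atTop h.1 (hK.lt_of_ne' h.2))

section Sum

variable {ι α M : Type*} [AddCommGroup M] [LinearOrder M] [IsOrderedAddMonoid M]
  [TopologicalSpace M] [OrderTopology M] {l : Filter α} {f : ι → α → M}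

theorem Finset.tendsto_sum_nhds_zero_or_atTop (s : Finset ι)
    (hf : ∀ i ∈ s, Tendsto (f i) l (𝓝 0) ∨ Tendsto (f i) l atTop) :
    Tendsto (fun a => ∑ i ∈ s, f i a) l (𝓝 0) ∨ Tendsto (fun a => ∑ i ∈ s, f i a) l atTop := by
  classical
  induction s using Finset.induction_on with
  | empty => exact Or.inl (by simpa using tendsto_const_nhds)
  | insert j s hj ih =>
    simp only [Finset.sum_insert hj]
    rcases hf j (s.mem_insert_self j) with hj0 | hjtop <;>
      rcases ih fun i hi => hf i (Finset.mem_insert_of_mem hi) with hs0 | hstop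
    · simpa using Or.inl (hj0.add hs0)
    · exact Or.inr (hj0.add_atTop hstop)
    · exact Or.inr (hjtop.atTop_add hs0)
    · exact Or.inr (hjtop.atTop_add_atTop hstop)

theorem Finset.tendsto_sum_atTop_of_nhds_zero_or_atTop {s : Finset ι}
    (hf : ∀ i ∈ s, Tendsto (f i) l (𝓝 0) ∨ Tendsto (f i) l atTop) {j : ι} (hj : j ∈ s)
    (hfj : Tendsto (f j) l atTop) : Tendsto (fun a => ∑ i ∈ s, f i a) l atTop := by
  classical
  simp only [← Finset.add_sum_erase s _ hj]
  rcases (s.erase j).tendsto_sum_nhds_zero_or_atTop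
    (fun i hi => hf i (Finset.mem_of_mem_erase hi)) with h0 | htop
  exacts [hfj.atTop_add h0, hfj.atTop_add_atTop htop]

end Sum

namespace LinearMap.IsSymmetric

variable {𝕜 E : Type*} [RCLike 𝕜] [NormedAddCommGroup E] [InnerProductSpace 𝕜 E]
  [FiniteDimensional 𝕜 E] {T : E →ₗ[𝕜] E} (hT : T.IsSymmetric) {n : ℕ}
  (hn : Module.finrank 𝕜 E = n)

theorem inner_eigenvectorBasis_eq_zero_of_apply_eq_smul {i : Fin n} {v : E} {ν : ℝ}
    (hv : T v = (ν : 𝕜) • v) (hne : hT.eigenvalues hn i ≠ ν) :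
    inner 𝕜 (hT.eigenvectorBasis hn i) v = 0 := by
  have h : (hT.eigenvalues hn i : 𝕜) * inner 𝕜 (hT.eigenvectorBasis hn i) v
      = ν * inner 𝕜 (hT.eigenvectorBasis hn i) v := by
    rw [← RCLike.conj_ofReal, ← inner_smul_left, ← hT.apply_eigenvectorBasis, hT, hv,
      inner_smul_right]
  exact (mul_eq_mul_right_iff.1 h).resolve_left (by exact_mod_cast hne)

theorem mem_span_eigenvectors_iff (p : ℝ → Prop) (x : E) :
    x ∈ Submodule.span 𝕜 {v | ∃ μ : ℝ, p μ ∧ T v = (μ : 𝕜) • v} ↔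
      ∀ i, ¬ p (hT.eigenvalues hn i) → inner 𝕜 (hT.eigenvectorBasis hn i) x = 0 := by
  constructor
  · intro hx i hi
    have hle : Submodule.span 𝕜 {v | ∃ μ : ℝ, p μ ∧ T v = (μ : 𝕜) • v} ≤
        LinearMap.ker (innerₛₗ 𝕜 (hT.eigenvectorBasis hn i)) := by
      refine Submodule.span_le.2 fun v ⟨ν, hν, hv⟩ => ?_
      exact hT.inner_eigenvectorBasis_eq_zero_of_apply_eq_smul hn hv fun h => hi (h ▸ hν)
    exact hle hx
  · intro hx
    rw [← (hT.eigenvectorBasis hn).sum_repr' x]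
    refine Submodule.sum_mem _ fun i _ => ?_
    by_cases hi : p (hT.eigenvalues hn i)
    · exact Submodule.smul_mem _ _
        (Submodule.subset_span ⟨_, hi, hT.apply_eigenvectorBasis hn i⟩)
    · simp [hx i hi]

theorem re_inner_apply_self_eq_sum (x : E) :
    RCLike.re (inner 𝕜 x (T x)) =
      ∑ i, hT.eigenvalues hn i * ‖inner 𝕜 (hT.eigenvectorBasis hn i) x‖ ^ 2 := by
  rw [← (hT.eigenvectorBasis hn).sum_inner_mul_inner, map_sum]
  refine Finset.sum_congr rfl fun i _ => ?_
  rw [← hT, hT.apply_eigenvectorBasis, inner_smul_left, RCLike.conj_ofReal, ← inner_conj_symm,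
    mul_left_comm, RCLike.conj_mul]
  norm_cast

end LinearMap.IsSymmetric

namespace IsSelfAdjoint

variable {E : Type*} [NormedAddCommGroup E] [InnerProductSpace ℂ E] [FiniteDimensional ℂ E]
  {A : E →L[ℂ] E} (hA : IsSelfAdjoint A) {n : ℕ} (hn : Module.finrank ℂ E = n)

theorem inner_eigenvectorBasis_exp_smul_apply (t : ℝ) (i : Fin n) (x : E) :
    inner ℂ (hA.isSymmetric.eigenvectorBasis hn i) (NormedSpace.exp (t • A) x) =
      Real.exp (t * hA.isSymmetric.eigenvalues hn i) *
        inner ℂ (hA.isSymmetric.eigenvectorBasis hn i) x := by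
  have := FiniteDimensional.complete ℂ E
  have heig : (t • A) (hA.isSymmetric.eigenvectorBasis hn i) =
      ((t * hA.isSymmetric.eigenvalues hn i : ℝ) : ℂ) • hA.isSymmetric.eigenvectorBasis hn i := by
    rw [smul_apply, ← ContinuousLinearMap.coe_coe, hA.isSymmetric.apply_eigenvectorBasis,
      Complex.ofReal_mul, mul_smul, Complex.coe_smul]
    rfl
  rw [← ((IsSelfAdjoint.all t).smul hA).exp.adjoint_eq, ContinuousLinearMap.adjoint_inner_right,
    NormedSpace.exp_apply_of_apply_eq_smul heig, ← Complex.exp_eq_exp_ℂ,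
    ← Complex.ofReal_exp, inner_smul_left, Complex.conj_ofReal]

theorem re_inner_exp_smul_apply_eq_sum (t : ℝ) (x : E) :
    (inner ℂ (NormedSpace.exp (t • A) x) (A (NormedSpace.exp (t • A) x))).re =
      ∑ i, hA.isSymmetric.eigenvalues hn i * Real.exp (t * hA.isSymmetric.eigenvalues hn i) ^ 2 *
        ‖inner ℂ (hA.isSymmetric.eigenvectorBasis hn i) x‖ ^ 2 := by
  rw [← ContinuousLinearMap.coe_coe A, ← RCLike.re_to_complex,
    hA.isSymmetric.re_inner_apply_self_eq_sum hn]
  simp_rw [hA.inner_eigenvectorBasis_exp_smul_apply hn, norm_mul, Complex.norm_real, mul_pow,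
    Real.norm_of_nonneg (Real.exp_pos _).le, mul_assoc]

end IsSelfAdjoint

/-- Let `A` be a self-adjoint endomorphism of a finite-dimensional complex
inner product space `E`, let `x ∈ E`, and let `f t = ⟪exp (t A) x, A (exp (t A) x)⟫` (real,
as `A` is self-adjoint).  If `x` lies in the span of the eigenvectors of `A` with nonpositive
eigenvalues then `f t → 0` as `t → +∞`; otherwise `f t → +∞`. -/
theorem tendsto_inner_exp_smul_selfAdjoint
    {E : Type*} [NormedAddCommGroup E] [InnerProductSpace ℂ E] [FiniteDimensional ℂ E]
    (A : E →L[ℂ] E) (hA : IsSelfAdjoint A) (x : E) :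
    (x ∈ Submodule.span ℂ {v : E | ∃ μ : ℝ, μ ≤ 0 ∧ A v = (μ : ℂ) • v} →
      Tendsto (fun t : ℝ =>
          (inner ℂ (NormedSpace.exp (t • A) x) (A (NormedSpace.exp (t • A) x)) : ℂ).re)
        atTop (nhds 0)) ∧
    (x ∉ Submodule.span ℂ {v : E | ∃ μ : ℝ, μ ≤ 0 ∧ A v = (μ : ℂ) • v} →
      Tendsto (fun t : ℝ =>
          (inner ℂ (NormedSpace.exp (t • A) x) (A (NormedSpace.exp (t • A) x)) : ℂ).re)
        atTop atTop) := by
  have hspan := hA.isSymmetric.mem_span_eigenvectors_iff rfl (· ≤ 0) x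
  simp_rw [hA.re_inner_exp_smul_apply_eq_sum rfl]
  refine ⟨fun hx => ?_, fun hx => ?_⟩
  · have hc := hspan.1 hx
    simpa using tendsto_finsetSum Finset.univ fun i _ =>
      tendsto_mul_exp_mul_sq_mul_nhds_zero ((em _).imp_right fun hi => by simp [hc i hi])
  · obtain ⟨j, hj, hcj⟩ : ∃ j, ¬ hA.isSymmetric.eigenvalues rfl j ≤ 0 ∧
        inner ℂ (hA.isSymmetric.eigenvectorBasis rfl j) x ≠ 0 := by
      simpa using mt hspan.2 hx
    exact Finset.tendsto_sum_atTop_of_nhds_zero_or_atTop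
      (fun i _ => tendsto_mul_exp_mul_sq_mul_nhds_zero_or_atTop _ (sq_nonneg _))
      (Finset.mem_univ j) (tendsto_mul_exp_mul_sq_mul_atTop (not_le.1 hj) (by positivity))
end

section
/- Let E be a finite-dimensional complex inner product space, A a self-adjoint (Hermitian) linear endomorphism of E, and x ∈ E. Then the function t ↦ ⟪exp(tA) x, A exp(tA) x⟫ (which is real-valued) is monotone nondecreasing on ℝ; moreover, if its values at t = 0 and t = 1 coincide, i.e. ⟪exp(A) x, A exp(A) x⟫ = ⟪x, A x⟫, then A x = 0 (and hence exp(tA) x = x for all t). -/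
/-!
The derivative of `t ↦ re ⟪exp (t • A) x, A (exp (t • A) x)⟫` is `2 ‖A (exp (t • A) x)‖ ^ 2 ≥ 0`.
If the values at `0` and `1` agree, the function is constant on `[0, 1]`, so this derivative
vanishes at `1 / 2`; then `A x = exp (-(A / 2)) (A (exp (A / 2) x)) = 0`, and
`t ↦ exp (t • A) x` has derivative `exp (t • A) (A x) = 0`.
-/

open NormedSpace Set

lemma Monotone.hasDerivAt_eq_zero_of_eq {f : ℝ → ℝ} (hf : Monotone f) {a b c f' : ℝ}
    (hab : f a = f b) (hc : c ∈ Ioo a b) (hd : HasDerivAt f f' c) : f' = 0 := by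
  refine IsLocalMax.hasDerivAt_eq_zero ?_ hd
  filter_upwards [Icc_mem_nhds hc.1 hc.2] with y hy
  calc f y ≤ f b := hf hy.2
    _ = f a := hab.symm
    _ ≤ f c := hf hc.1.le

section BanachSpace

variable {E : Type*} [NormedAddCommGroup E] [NormedSpace ℂ E]

lemma apply_exp_smul_apply_comm (A : E →L[ℂ] E) (t : ℝ) (x : E) :
    A (exp (t • A) x) = exp (t • A) (A x) :=
  congr($(((Commute.refl A).smul_right t).exp_right.eq) x)

variable [CompleteSpace E]

lemma hasDerivAt_exp_smul_apply (A : E →L[ℂ] E) (x : E) (t : ℝ) :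
    HasDerivAt (fun u : ℝ => exp (u • A) x) (A (exp (t • A) x)) t := by
  rw [apply_exp_smul_apply_comm]
  exact ((ContinuousLinearMap.apply ℂ E x).restrictScalars ℝ).hasFDerivAt.comp_hasDerivAt t
    (hasDerivAt_exp_smul_const A t)

lemma exp_smul_apply_eq_self_of_apply_eq_zero (A : E →L[ℂ] E) {x : E} (hx : A x = 0) (t : ℝ) :
    exp (t • A) x = x := by
  have hderiv (u : ℝ) : HasDerivAt (fun u : ℝ => exp (u • A) x) 0 u := by
    simpa [apply_exp_smul_apply_comm, hx] using hasDerivAt_exp_smul_apply A x u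
  simpa using is_const_of_deriv_eq_zero (fun u => (hderiv u).differentiableAt)
    (fun u => (hderiv u).deriv) t 0

lemma apply_eq_zero_of_apply_exp_smul_apply_eq_zero (A : E →L[ℂ] E) (t : ℝ) {x : E}
    (h : A (exp (t • A) x) = 0) : A x = 0 := by
  -- the library's lemmas on `exp (-a) * exp a` are stated for normed `ℚ`-algebras
  let +nondep : NormedAlgebra ℚ (E →L[ℂ] E) := .restrictScalars ℚ ℂ (E →L[ℂ] E)
  rw [← ((Commute.refl A).smul_right t).exp_neg_mul_mul_exp_eq_self]
  simp [h]

end BanachSpace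

section InnerProductSpace

variable {E : Type*} [NormedAddCommGroup E] [InnerProductSpace ℂ E]

lemma hasDerivAt_re_inner_apply_self {A : E →L[ℂ] E} (hA : (A : E →ₗ[ℂ] E).IsSymmetric)
    {y : ℝ → E} {y' : E} {t : ℝ} (hy : HasDerivAt y y' t) :
    HasDerivAt (fun u => (inner ℂ (y u) (A (y u))).re) (2 * (inner ℂ (A (y t)) y').re) t := by
  have hAy : HasDerivAt (fun u => A (y u)) (A y') t :=
    (A.restrictScalars ℝ).hasFDerivAt.comp_hasDerivAt t hy
  refine (Complex.reCLM.hasFDerivAt.comp_hasDerivAt t (hy.inner ℂ hAy)).congr_deriv ?_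
  have hsymm : inner ℂ (y t) (A y') = inner ℂ (A (y t)) y' := (hA (y t) y').symm
  rw [Complex.reCLM_apply, Complex.add_re, hsymm, ← inner_conj_symm, Complex.conj_re]
  ring

lemma hasDerivAt_re_inner_exp_smul_apply_self [CompleteSpace E] {A : E →L[ℂ] E}
    (hA : (A : E →ₗ[ℂ] E).IsSymmetric) (x : E) (t : ℝ) :
    HasDerivAt (fun u : ℝ => (inner ℂ (exp (u • A) x) (A (exp (u • A) x))).re)
      (2 * ‖A (exp (t • A) x)‖ ^ 2) t := by
  convert hasDerivAt_re_inner_apply_self hA (hasDerivAt_exp_smul_apply A x t) using 2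
  exact (inner_self_eq_norm_sq (𝕜 := ℂ) _).symm

end InnerProductSpace

/-- For a self-adjoint endomorphism `A` of a finite-dimensional complex inner
product space and `x ∈ E`, the function `t ↦ ⟪exp(tA) x, A exp(tA) x⟫` is monotone
nondecreasing on `ℝ`; moreover if its values at `t = 1` and `t = 0` coincide, then `A x = 0`
(and hence `exp(tA) x = x` for all `t`). -/
theorem monotone_inner_exp_smul_selfAdjoint
    {E : Type*} [NormedAddCommGroup E] [InnerProductSpace ℂ E] [FiniteDimensional ℂ E]
    (A : E →L[ℂ] E) (hA : IsSelfAdjoint A) (x : E) :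
    Monotone (fun t : ℝ =>
      (inner ℂ (NormedSpace.exp (t • A) x) (A (NormedSpace.exp (t • A) x)) : ℂ).re) ∧
    ((inner ℂ (NormedSpace.exp ((1 : ℝ) • A) x)
          (A (NormedSpace.exp ((1 : ℝ) • A) x)) : ℂ).re =
        (inner ℂ (NormedSpace.exp ((0 : ℝ) • A) x)
          (A (NormedSpace.exp ((0 : ℝ) • A) x)) : ℂ).re →
      A x = 0 ∧ ∀ t : ℝ, NormedSpace.exp (t • A) x = x) := by
  have hderiv := hasDerivAt_re_inner_exp_smul_apply_self hA.isSymmetric x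
  have hmono := monotone_of_hasDerivAt_nonneg hderiv fun t => by positivity
  refine ⟨hmono, fun h10 => ?_⟩
  have hmid := hmono.hasDerivAt_eq_zero_of_eq h10.symm ⟨by norm_num, by norm_num⟩ (hderiv (1 / 2))
  have hAx : A x = 0 :=
    apply_eq_zero_of_apply_exp_smul_apply_eq_zero A (1 / 2) (by simpa using hmid)
  exact ⟨hAx, exp_smul_apply_eq_self_of_apply_eq_zero A hAx⟩
end
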